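/- For any matrix M ∈ ℝ^{d₁×d₂}, the trace norm (sum of singular values) divided by √(d₁d₂) is at most the max-norm of M, where the max-norm is the infimum over factorizations M = U Vᵀ of ‖U‖_{2,∞}·‖V‖_{2,∞} (maximum ℓ₂ row norms). -/

import Mathlib

/-!
Given a factorization `M = U Vᵀ`, let `(bᵢ)` be an orthonormal eigenbasis of `MᵀM`. The vectors
`M bᵢ` are pairwise orthogonal and their norms are the singular values of `M`, so with
`pᵢ = M bᵢ / ‖M bᵢ‖` (taken to be `0` when `M bᵢ = 0`) we get
`‖M‖_* = ∑ᵢ ⟪pᵢ, U Vᵀ bᵢ⟫ = ∑ᵢ ⟪Uᵀ pᵢ, Vᵀ bᵢ⟫`. Cauchy–Schwarz and Bessel's inequality for the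
families `(pᵢ)` and `(bᵢ)` bound this by `‖U‖_F ‖V‖_F`, and a Frobenius norm is at most
`√(number of rows)` times the largest row norm.
-/

open scoped BigOperators

/-- Maximum ℓ₂ row norm of a matrix (the ‖·‖_{2,∞} operator norm). -/
noncomputable def rowNormMax {m k : ℕ} (U : Matrix (Fin m) (Fin k) ℝ) : ℝ :=
  ⨆ i, Real.sqrt (∑ l, (U i l) ^ 2)

/-- The max-norm: infimum over factorizations M = U Vᵀ of ‖U‖_{2,∞}‖V‖_{2,∞}. -/
noncomputable def maxNorm {d1 d2 : ℕ} (M : Matrix (Fin d1) (Fin d2) ℝ) : ℝ :=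
  sInf { x | ∃ (k : ℕ) (U : Matrix (Fin d1) (Fin k) ℝ) (V : Matrix (Fin d2) (Fin k) ℝ),
    M = U * V.transpose ∧ x = rowNormMax U * rowNormMax V }

/-- Elementwise sup-norm ‖M‖_∞. -/
noncomputable def supNorm {d1 d2 : ℕ} (M : Matrix (Fin d1) (Fin d2) ℝ) : ℝ :=
  ⨆ i, ⨆ j, |M i j|

/-- Frobenius norm. -/
noncomputable def frobNorm {d1 d2 : ℕ} (M : Matrix (Fin d1) (Fin d2) ℝ) : ℝ :=
  Real.sqrt (∑ i, ∑ j, (M i j) ^ 2)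

/-- Trace norm: the sum of the singular values of M, i.e. of the square roots of the
eigenvalues of MᵀM. -/
noncomputable def traceNorm {d1 d2 : ℕ} (M : Matrix (Fin d1) (Fin d2) ℝ) : ℝ :=
  ∑ i, Real.sqrt ((Matrix.isHermitian_conjTranspose_mul_self M).eigenvalues i)

open scoped InnerProductSpace Matrix
open WithLp (toLp)

section Bessel

variable {ι E : Type*} [Fintype ι] [NormedAddCommGroup E] [InnerProductSpace ℝ E]

lemma Orthonormal.sum_inner_sq_le {v : ι → E} (hv : Orthonormal ℝ v) (x : E) :
    ∑ i, ⟪v i, x⟫_ℝ ^ 2 ≤ ‖x‖ ^ 2 := by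
  simpa only [Real.norm_eq_abs, sq_abs] using hv.sum_inner_products_le (s := Finset.univ) x

lemma sum_inner_inv_norm_smul_sq_le {v : ι → E} (hv : Pairwise fun i j ↦ ⟪v i, v j⟫_ℝ = 0)
    (x : E) : ∑ i, ⟪‖v i‖⁻¹ • v i, x⟫_ℝ ^ 2 ≤ ‖x‖ ^ 2 := by
  classical
  have hON : Orthonormal ℝ fun i : {i // v i ≠ 0} ↦ ‖v i‖⁻¹ • v i := by
    refine ⟨fun i ↦ norm_smul_inv_norm i.2, fun i j hij ↦ ?_⟩
    simp only [real_inner_smul_left, real_inner_smul_right,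
      hv fun h ↦ hij (Subtype.ext h), mul_zero]
  rw [← Fintype.sum_subtype_add_sum_subtype (fun i ↦ v i ≠ 0)]
  have hzero : ∑ i : {i // ¬v i ≠ 0}, ⟪‖v i‖⁻¹ • v i, x⟫_ℝ ^ 2 = 0 :=
    Finset.sum_eq_zero fun i _ ↦ by simp [not_not.mp i.2]
  simpa only [hzero, add_zero] using hON.sum_inner_sq_le x

end Bessel

section EuclideanMatrix

variable {m n : Type*} [Fintype m] [Fintype n]

lemma inner_toLp_mulVec (A : Matrix m n ℝ) (x : EuclideanSpace ℝ m) (y : EuclideanSpace ℝ n) :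
    ⟪x, toLp 2 (A *ᵥ y)⟫_ℝ = ⟪toLp 2 (Aᵀ *ᵥ x), y⟫_ℝ := by
  simp only [EuclideanSpace.inner_eq_star_dotProduct, star_trivial, Matrix.dotProduct_mulVec,
    Matrix.vecMul_transpose]

lemma inner_mulVec_eigenvectorBasis [DecidableEq n] (M : Matrix m n ℝ)
    (hA : (Mᴴ * M).IsHermitian) (i j : n) :
    ⟪toLp 2 (M *ᵥ hA.eigenvectorBasis i), toLp 2 (M *ᵥ hA.eigenvectorBasis j)⟫_ℝ =
      hA.eigenvalues i * ⟪hA.eigenvectorBasis i, hA.eigenvectorBasis j⟫_ℝ := by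
  rw [inner_toLp_mulVec, Matrix.mulVec_mulVec, ← Matrix.conjTranspose_eq_transpose_of_trivial,
    hA.mulVec_eigenvectorBasis, WithLp.toLp_smul, WithLp.toLp_ofLp, real_inner_smul_left]

end EuclideanMatrix

section Frobenius

variable {m k : ℕ}

lemma sqrt_sum_sq_transpose_mulVec_le {ι : Type*} [Fintype ι] (U : Matrix (Fin m) (Fin k) ℝ)
    {p : ι → EuclideanSpace ℝ (Fin m)} (hp : ∀ x, ∑ i, ⟪p i, x⟫_ℝ ^ 2 ≤ ‖x‖ ^ 2) :
    √(∑ i, ‖toLp 2 (Uᵀ *ᵥ p i)‖ ^ 2) ≤ frobNorm U := by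
  refine Real.sqrt_le_sqrt ?_
  calc ∑ i, ‖toLp 2 (Uᵀ *ᵥ p i)‖ ^ 2
      = ∑ l, ∑ i, ⟪p i, toLp 2 (Uᵀ l)⟫_ℝ ^ 2 := by
        simp only [EuclideanSpace.real_norm_sq_eq]
        rw [Finset.sum_comm]
        simp only [EuclideanSpace.inner_eq_star_dotProduct, star_trivial]
        rfl
    _ ≤ ∑ l, ‖toLp 2 (Uᵀ l)‖ ^ 2 := Finset.sum_le_sum fun l _ ↦ hp _
    _ = ∑ j, ∑ l, U j l ^ 2 := by
        simp only [EuclideanSpace.real_norm_sq_eq]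
        exact Finset.sum_comm

lemma rowNormMax_nonneg (U : Matrix (Fin m) (Fin k) ℝ) : 0 ≤ rowNormMax U :=
  Real.iSup_nonneg fun _ ↦ Real.sqrt_nonneg _

lemma sqrt_sum_sq_le_rowNormMax (U : Matrix (Fin m) (Fin k) ℝ) (i : Fin m) :
    √(∑ l, U i l ^ 2) ≤ rowNormMax U :=
  Finite.le_ciSup (fun i ↦ √(∑ l, U i l ^ 2)) i

lemma frobNorm_le_sqrt_mul_rowNormMax (U : Matrix (Fin m) (Fin k) ℝ) :
    frobNorm U ≤ √m * rowNormMax U := by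
  have hrow (i : Fin m) : ∑ l, U i l ^ 2 ≤ rowNormMax U ^ 2 :=
    (Real.sqrt_le_iff.mp (sqrt_sum_sq_le_rowNormMax U i)).2
  calc frobNorm U ≤ √(m * rowNormMax U ^ 2) :=
        Real.sqrt_le_sqrt <| by simpa using Finset.sum_le_sum fun i (_ : i ∈ Finset.univ) ↦ hrow i
    _ = √m * rowNormMax U := by
        rw [Real.sqrt_mul (Nat.cast_nonneg m), Real.sqrt_sq (rowNormMax_nonneg U)]

end Frobenius

section TraceNorm

variable {m n k : ℕ}

lemma sum_inner_mul_transpose_mulVec_le {ι : Type*} [Fintype ι] (U : Matrix (Fin m) (Fin k) ℝ)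
    (V : Matrix (Fin n) (Fin k) ℝ) {p : ι → EuclideanSpace ℝ (Fin m)}
    {q : ι → EuclideanSpace ℝ (Fin n)} (hp : ∀ x, ∑ i, ⟪p i, x⟫_ℝ ^ 2 ≤ ‖x‖ ^ 2)
    (hq : ∀ x, ∑ i, ⟪q i, x⟫_ℝ ^ 2 ≤ ‖x‖ ^ 2) :
    ∑ i, ⟪p i, toLp 2 ((U * Vᵀ) *ᵥ q i)⟫_ℝ ≤ frobNorm U * frobNorm V := by
  calc ∑ i, ⟪p i, toLp 2 ((U * Vᵀ) *ᵥ q i)⟫_ℝ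
      = ∑ i, ⟪toLp 2 (Uᵀ *ᵥ p i), toLp 2 (Vᵀ *ᵥ q i)⟫_ℝ := by
        refine Finset.sum_congr rfl fun i _ ↦ ?_
        rw [← Matrix.mulVec_mulVec]
        exact inner_toLp_mulVec U (p i) (toLp 2 (Vᵀ *ᵥ q i))
    _ ≤ ∑ i, ‖toLp 2 (Uᵀ *ᵥ p i)‖ * ‖toLp 2 (Vᵀ *ᵥ q i)‖ :=
        Finset.sum_le_sum fun i _ ↦ real_inner_le_norm _ _
    _ ≤ √(∑ i, ‖toLp 2 (Uᵀ *ᵥ p i)‖ ^ 2) * √(∑ i, ‖toLp 2 (Vᵀ *ᵥ q i)‖ ^ 2) :=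
        Real.sum_mul_le_sqrt_mul_sqrt _ _ _
    _ ≤ frobNorm U * frobNorm V :=
        mul_le_mul (sqrt_sum_sq_transpose_mulVec_le U hp) (sqrt_sum_sq_transpose_mulVec_le V hq)
          (Real.sqrt_nonneg _) (Real.sqrt_nonneg _)

lemma traceNorm_eq_sum_norm_mulVec_eigenvectorBasis (M : Matrix (Fin m) (Fin n) ℝ) :
    traceNorm M = ∑ i, ‖toLp 2
      (M *ᵥ (Matrix.isHermitian_conjTranspose_mul_self M).eigenvectorBasis i)‖ := by
  have hA := Matrix.isHermitian_conjTranspose_mul_self M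
  refine Finset.sum_congr rfl fun i _ ↦ ?_
  rw [← Real.sqrt_sq (norm_nonneg _), ← real_inner_self_eq_norm_sq, inner_mulVec_eigenvectorBasis,
    real_inner_self_eq_norm_sq, hA.eigenvectorBasis.orthonormal.1 i, one_pow, mul_one]

lemma traceNorm_mul_transpose_le_frobNorm_mul (U : Matrix (Fin m) (Fin k) ℝ)
    (V : Matrix (Fin n) (Fin k) ℝ) : traceNorm (U * Vᵀ) ≤ frobNorm U * frobNorm V := by
  have hA := Matrix.isHermitian_conjTranspose_mul_self (U * Vᵀ)
  set v := fun i ↦ toLp 2 ((U * Vᵀ) *ᵥ hA.eigenvectorBasis i)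
  have horth : Pairwise fun i j ↦ ⟪v i, v j⟫_ℝ = 0 := fun i j hij ↦
    (inner_mulVec_eigenvectorBasis _ hA i j).trans <| by
      rw [hA.eigenvectorBasis.orthonormal.2 hij, mul_zero]
  calc traceNorm (U * Vᵀ) = ∑ i, ‖v i‖ := traceNorm_eq_sum_norm_mulVec_eigenvectorBasis _
    _ = ∑ i, ⟪‖v i‖⁻¹ • v i, v i⟫_ℝ := by
        simp only [real_inner_smul_left, real_inner_self_eq_norm_sq, sq, ← mul_assoc,
          inv_mul_mul_self]
    _ ≤ frobNorm U * frobNorm V :=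
        sum_inner_mul_transpose_mulVec_le U V (sum_inner_inv_norm_smul_sq_le horth)
          hA.eigenvectorBasis.orthonormal.sum_inner_sq_le

lemma traceNorm_mul_transpose_le (U : Matrix (Fin m) (Fin k) ℝ) (V : Matrix (Fin n) (Fin k) ℝ) :
    traceNorm (U * Vᵀ) ≤ rowNormMax U * rowNormMax V * √(m * n) :=
  calc traceNorm (U * Vᵀ) ≤ frobNorm U * frobNorm V := traceNorm_mul_transpose_le_frobNorm_mul U V
    _ ≤ (√m * rowNormMax U) * (√n * rowNormMax V) :=
        mul_le_mul (frobNorm_le_sqrt_mul_rowNormMax U) (frobNorm_le_sqrt_mul_rowNormMax V)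
          (Real.sqrt_nonneg _) (mul_nonneg (Real.sqrt_nonneg _) (rowNormMax_nonneg U))
    _ = rowNormMax U * rowNormMax V * √(m * n) := by
        rw [Real.sqrt_mul (Nat.cast_nonneg m)]; ring

end TraceNorm

/-- ‖M‖_*/√(d₁d₂) ≤ ‖M‖_max. -/
theorem traceNorm_div_le_maxNorm {d1 d2 : ℕ} (M : Matrix (Fin d1) (Fin d2) ℝ) :
    traceNorm M / Real.sqrt ((d1 : ℝ) * d2) ≤ maxNorm M := by
  refine le_csInf ⟨_, d2, M, 1, by simp, rfl⟩ ?_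
  rintro _ ⟨k, U, V, rfl, rfl⟩
  exact div_le_of_le_mul₀ (Real.sqrt_nonneg _)
    (mul_nonneg (rowNormMax_nonneg U) (rowNormMax_nonneg V))
    (traceNorm_mul_transpose_le U V)
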